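/- arXiv:1307.5561 — 4 statements merged into one kernel-verified Lean document; each statement's English description precedes it below -/
import Mathlib

section
/- Let a, b > 0 and constants σ₊, σ̃₋ > 0, m, M > 0 with m ≤ M. For μ > 1 define φ(μ) = min{ ((μ−1)σ̃₋²)/(μσ₊²), (m σ̃₋)/(√μ · M σ₊) }. Then φ is maximized over μ > 1 at the unique μ* > 1 where the two terms are equal, namely μ* = (1 + κ_G²/(2κ_f²) − (κ_G/(2κ_f))√(κ_G²/κ_f² + 4))⁻¹ with κ_f = M/m and κ_G = σ₊/σ̃₋, and the maximum value equals (1/(2κ_f))√(1/κ_f² + 4/κ_G²) − 1/(2κ_f²). -/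
/-- `φ(μ)`: the convergence constant after optimizing over the algorithm parameter `c`. -/
noncomputable def phi (σp σm m M μ : ℝ) : ℝ :=
  min ((μ - 1) * σm ^ 2 / (μ * σp ^ 2)) (m * σm / (Real.sqrt μ * M * σp))

/-!
The first term of `φ` increases with `μ` and the second decreases, so their minimum is largest
where they cross. Writing `t = √μ` and `r = κ_G / κ_f`, the crossing condition is the quadratic
`t ^ 2 = 1 + r * t`, whose only positive root is `s = (r + √(r ^ 2 + 4)) / 2 > 1`; then `μ* = s ^ 2`
and `φ(μ*) = 1 / (s κ_f κ_G) = (√(r ^ 2 + 4) - r) / (2 κ_f κ_G)`.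
-/

open Real Set

theorem min_le_min_of_monotoneOn_of_antitoneOn {α β : Type*} [LinearOrder α] [LinearOrder β]
    {f g : α → β} {s : Set α} (hf : MonotoneOn f s) (hg : AntitoneOn g s) {x₀ x : α}
    (hx₀ : x₀ ∈ s) (hx : x ∈ s) (hfg : f x₀ = g x₀) : min (f x) (g x) ≤ min (f x₀) (g x₀) := by
  rw [← hfg, min_self]
  rcases le_total x x₀ with hle | hle
  · exact (min_le_left _ _).trans (hf hx hx₀ hle)
  · exact (min_le_right _ _).trans (hfg ▸ hg hx₀ hx hle)

noncomputable def posRoot (r : ℝ) : ℝ := (r + √(r ^ 2 + 4)) / 2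

lemma sq_sqrt_sq_add_four (r : ℝ) : √(r ^ 2 + 4) ^ 2 = r ^ 2 + 4 :=
  sq_sqrt (by positivity)

lemma lt_sqrt_sq_add_four (r : ℝ) : |r| < √(r ^ 2 + 4) := by
  rw [← sqrt_sq_eq_abs]
  exact sqrt_lt_sqrt (sq_nonneg r) (by linarith)

lemma posRoot_sq (r : ℝ) : posRoot r ^ 2 = 1 + r * posRoot r := by
  unfold posRoot
  linear_combination sq_sqrt_sq_add_four r / 4

lemma posRoot_pos (r : ℝ) : 0 < posRoot r := by
  unfold posRoot
  linarith [lt_sqrt_sq_add_four r, neg_abs_le r]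

lemma one_lt_posRoot {r : ℝ} (hr : 0 < r) : 1 < posRoot r := by
  have := posRoot_sq r
  nlinarith [posRoot_pos r]

lemma sq_eq_one_add_mul_iff_eq_posRoot {r t : ℝ} (ht : 0 < t) :
    t ^ 2 = 1 + r * t ↔ t = posRoot r := by
  refine ⟨fun h ↦ ?_, fun h ↦ h ▸ posRoot_sq r⟩
  -- the other root is `r - posRoot r = -(posRoot r)⁻¹ < 0`
  have hfactor : (t - posRoot r) * (t + posRoot r - r) = 0 := by
    linear_combination h - posRoot_sq r
  have hother : r < t + posRoot r := by nlinarith [posRoot_sq r, posRoot_pos r]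
  rcases mul_eq_zero.mp hfactor with h | h <;> linarith

lemma posRoot_inv (r : ℝ) : (posRoot r)⁻¹ = (√(r ^ 2 + 4) - r) / 2 := by
  refine inv_eq_of_mul_eq_one_left ?_
  unfold posRoot
  linear_combination sq_sqrt_sq_add_four r / 4

lemma posRoot_sq_eq_inv (r : ℝ) :
    posRoot r ^ 2 = (1 + r ^ 2 / 2 - r / 2 * √(r ^ 2 + 4))⁻¹ := by
  rw [← inv_inv (posRoot r ^ 2), ← inv_pow, posRoot_inv]
  congr 1
  linear_combination sq_sqrt_sq_add_four r / 4

section Terms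

variable {σp σm m M : ℝ}

lemma monotoneOn_first_term (hσp : 0 < σp) :
    MonotoneOn (fun μ : ℝ ↦ (μ - 1) * σm ^ 2 / (μ * σp ^ 2)) (Ioi 0) := by
  intro x hx y hy hxy
  simp only [mem_Ioi] at hx hy
  rw [div_le_div_iff₀ (by positivity) (by positivity)]
  nlinarith [mul_nonneg (mul_nonneg (sq_nonneg σm) (sq_nonneg σp)) (sub_nonneg.mpr hxy)]

lemma antitoneOn_second_term (hσp : 0 < σp) (hσm : 0 < σm) (hm : 0 < m) (hM : 0 < M) :
    AntitoneOn (fun μ : ℝ ↦ m * σm / (√μ * M * σp)) (Ioi 0) := by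
  intro x hx y _ hxy
  have hx' : 0 < √x := sqrt_pos.mpr hx
  have hsqrt : √x ≤ √y := sqrt_le_sqrt hxy
  apply div_le_div_of_nonneg_left (by positivity) (by positivity)
  gcongr

lemma terms_eq_iff_sqrt_eq_posRoot (hσp : 0 < σp) (hσm : 0 < σm) (hM : 0 < M)
    {μ : ℝ} (hμ : 0 < μ) :
    (μ - 1) * σm ^ 2 / (μ * σp ^ 2) = m * σm / (√μ * M * σp) ↔
      √μ = posRoot (σp / σm / (M / m)) := by
  obtain ⟨t, ht, rfl⟩ : ∃ t, 0 < t ∧ t ^ 2 = μ := ⟨√μ, sqrt_pos.mpr hμ, sq_sqrt hμ.le⟩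
  rw [sqrt_sq ht.le, ← sq_eq_one_add_mul_iff_eq_posRoot ht, ← sub_eq_zero]
  have hfactor : (t ^ 2 - 1) * σm ^ 2 / (t ^ 2 * σp ^ 2) - m * σm / (t * M * σp) =
      (t ^ 2 - (1 + σp / σm / (M / m) * t)) * (σm ^ 2 / (t ^ 2 * σp ^ 2)) := by
    field_simp
    ring
  rw [hfactor, mul_eq_zero, sub_eq_zero, or_iff_left (by positivity)]

end Terms

theorem stmt_9_general (σp σm m M : ℝ) (hσp : 0 < σp) (hσm : 0 < σm) (hm : 0 < m)
    (hM : 0 < M)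
    (κf κG μstar : ℝ) (hκf : κf = M / m) (hκG : κG = σp / σm)
    (hμstar : μstar =
      (1 + κG ^ 2 / (2 * κf ^ 2) - κG / (2 * κf) * Real.sqrt (κG ^ 2 / κf ^ 2 + 4))⁻¹) :
    1 < μstar ∧
    (μstar - 1) * σm ^ 2 / (μstar * σp ^ 2) = m * σm / (Real.sqrt μstar * M * σp) ∧
    (∀ μ : ℝ, 1 < μ →
      (μ - 1) * σm ^ 2 / (μ * σp ^ 2) = m * σm / (Real.sqrt μ * M * σp) → μ = μstar) ∧
    (∀ μ : ℝ, 1 < μ → phi σp σm m M μ ≤ phi σp σm m M μstar) ∧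
    phi σp σm m M μstar =
      1 / (2 * κf) * Real.sqrt (1 / κf ^ 2 + 4 / κG ^ 2) - 1 / (2 * κf ^ 2) := by
  subst hκf hκG
  set r := σp / σm / (M / m) with hr
  have hr0 : 0 < r := by positivity
  have hrM : r * (σm * M) = σp * m := by
    rw [hr]
    field_simp
  have hμstar_eq : μstar = posRoot r ^ 2 := by
    rw [hμstar, posRoot_sq_eq_inv]
    congr 1
    simp only [hr, div_pow]
    ring
  have hμstar0 : 0 < μstar := hμstar_eq ▸ pow_pos (posRoot_pos r) 2
  have hsqrt : √μstar = posRoot r := by rw [hμstar_eq, sqrt_sq (posRoot_pos r).le]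
  have hcross {μ : ℝ} (hμ : 0 < μ) := terms_eq_iff_sqrt_eq_posRoot (m := m) hσp hσm hM hμ
  have hstar := (hcross hμstar0).mpr hsqrt
  have hphi : phi σp σm m M μstar = m * σm / (√μstar * M * σp) := by rw [phi, hstar, min_self]
  refine ⟨hμstar_eq ▸ one_lt_pow₀ (one_lt_posRoot hr0) two_ne_zero, hstar, ?_, ?_, ?_⟩
  · intro μ hμ h
    rw [← sq_sqrt (zero_lt_one.trans hμ).le, (hcross (zero_lt_one.trans hμ)).mp h, hμstar_eq]
  · exact fun μ hμ ↦ min_le_min_of_monotoneOn_of_antitoneOn (monotoneOn_first_term hσp)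
      (antitoneOn_second_term hσp hσm hm hM) hμstar0 (zero_lt_one.trans hμ) hstar
  · have hsqrt_sum : √(1 / (M / m) ^ 2 + 4 / (σp / σm) ^ 2) = √(r ^ 2 + 4) / (σp / σm) := by
      rw [← sqrt_sq (by positivity : 0 ≤ √(r ^ 2 + 4) / (σp / σm)), div_pow (√(r ^ 2 + 4)),
        sq_sqrt_sq_add_four]
      congr 1
      field_simp
      linear_combination (-(r * σm * M + σp * m)) * hrM
    rw [hphi, hsqrt, hsqrt_sum, div_eq_mul_inv, mul_inv, mul_inv, posRoot_inv]
    field_simp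
    linear_combination -hrM

theorem stmt_9 (σp σm m M : ℝ) (hσp : 0 < σp) (hσm : 0 < σm) (hm : 0 < m)
    (hM : 0 < M) (hmM : m ≤ M)
    (κf κG μstar : ℝ) (hκf : κf = M / m) (hκG : κG = σp / σm)
    (hμstar : μstar =
      (1 + κG ^ 2 / (2 * κf ^ 2) - κG / (2 * κf) * Real.sqrt (κG ^ 2 / κf ^ 2 + 4))⁻¹) :
    1 < μstar ∧
    (μstar - 1) * σm ^ 2 / (μstar * σp ^ 2) = m * σm / (Real.sqrt μstar * M * σp) ∧
    (∀ μ : ℝ, 1 < μ →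
      (μ - 1) * σm ^ 2 / (μ * σp ^ 2) = m * σm / (Real.sqrt μ * M * σp) → μ = μstar) ∧
    (∀ μ : ℝ, 1 < μ → phi σp σm m M μ ≤ phi σp σm m M μstar) ∧
    phi σp σm m M μstar =
      1 / (2 * κf) * Real.sqrt (1 / κf ^ 2 + 4 / κG ^ 2) - 1 / (2 * κf ^ 2) :=
  stmt_9_general σp σm m M hσp hσm hm hM κf κG μstar hκf hκG hμstar
end

section
/- Let f : R^n → R be differentiable and strongly convex with constant m > 0, i.e., ⟨∇f(a) − ∇f(b), a − b⟩ ≥ m‖a−b‖² for all a, b. Suppose x, x* ∈ R^n and vector equations ∇f(x) − ∇f(x*) = c M₊(z' − z) − M₋(β − β*), (c/2)M₋ᵀ(x − x*) = β − β', and (1/2)M₊ᵀ(x − x*) = z − z* hold for matrices M₊, M₋ and vectors z, z', z*, β, β', β* and c > 0. Then m‖x − x*‖² ≤ 2c⟨z' − z, z − z*⟩ + (2/c)⟨β' − β, β − β*⟩. -/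
open Matrix
open scoped RealInnerProductSpace

lemma Matrix.inner_toEuclideanLin_eq_inner_transpose {ι κ : Type*} [Fintype ι] [DecidableEq ι]
    [Fintype κ] [DecidableEq κ] (M : Matrix ι κ ℝ) (v : EuclideanSpace ℝ κ)
    (w : EuclideanSpace ℝ ι) :
    ⟪Matrix.toEuclideanLin M v, w⟫ = ⟪v, Matrix.toEuclideanLin Mᵀ w⟫ := by
  rw [← conjTranspose_eq_transpose_of_trivial, toEuclideanLin_conjTranspose_eq_adjoint,
    LinearMap.adjoint_inner_right]

theorem stmt_14_general (n p q : ℕ) (f : EuclideanSpace ℝ (Fin n) → ℝ)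
    (m : ℝ)
    (hsc : ∀ a b : EuclideanSpace ℝ (Fin n),
      ⟪gradient f a - gradient f b, a - b⟫ ≥ m * ‖a - b‖ ^ 2)
    (Mp : Matrix (Fin n) (Fin p) ℝ) (Mm : Matrix (Fin n) (Fin q) ℝ)
    (x xstar : EuclideanSpace ℝ (Fin n))
    (z z' zstar : EuclideanSpace ℝ (Fin p))
    (β β' βstar : EuclideanSpace ℝ (Fin q))
    (c : ℝ) (hc : 0 < c)
    (h1 : gradient f x - gradient f xstar =
      c • (Matrix.toEuclideanLin Mp) (z' - z) - (Matrix.toEuclideanLin Mm) (β - βstar))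
    (h2 : (c / 2) • (Matrix.toEuclideanLin Mmᵀ) (x - xstar) = β - β')
    (h3 : (1 / 2 : ℝ) • (Matrix.toEuclideanLin Mpᵀ) (x - xstar) = z - zstar) :
    m * ‖x - xstar‖ ^ 2 ≤
      2 * c * ⟪z' - z, z - zstar⟫ + (2 / c) * ⟪β' - β, β - βstar⟫ := by
  have hMp : Matrix.toEuclideanLin Mpᵀ (x - xstar) = (2 : ℝ) • (z - zstar) := by
    rw [← h3, smul_smul]; norm_num
  have hMm : Matrix.toEuclideanLin Mmᵀ (x - xstar) = (2 / c) • (β - β') := by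
    rw [← h2, smul_smul, div_mul_div_comm, mul_comm 2 c, div_self (by positivity), one_smul]
  calc m * ‖x - xstar‖ ^ 2 ≤ ⟪gradient f x - gradient f xstar, x - xstar⟫ := hsc x xstar
    _ = c * ⟪z' - z, Matrix.toEuclideanLin Mpᵀ (x - xstar)⟫
          - ⟪β - βstar, Matrix.toEuclideanLin Mmᵀ (x - xstar)⟫ := by
      rw [h1, inner_sub_left, real_inner_smul_left, inner_toEuclideanLin_eq_inner_transpose,
        inner_toEuclideanLin_eq_inner_transpose]
    _ = 2 * c * ⟪z' - z, z - zstar⟫ + (2 / c) * ⟪β' - β, β - βstar⟫ := by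
      rw [hMp, hMm, real_inner_smul_right, real_inner_smul_right, ← neg_sub β β', inner_neg_left,
        real_inner_comm (β - βstar)]
      ring

theorem stmt_14 (n p q : ℕ) (f : EuclideanSpace ℝ (Fin n) → ℝ)
    (hdiff : Differentiable ℝ f) (m : ℝ) (hm : 0 < m)
    (hsc : ∀ a b : EuclideanSpace ℝ (Fin n),
      ⟪gradient f a - gradient f b, a - b⟫ ≥ m * ‖a - b‖ ^ 2)
    (Mp : Matrix (Fin n) (Fin p) ℝ) (Mm : Matrix (Fin n) (Fin q) ℝ)
    (x xstar : EuclideanSpace ℝ (Fin n))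
    (z z' zstar : EuclideanSpace ℝ (Fin p))
    (β β' βstar : EuclideanSpace ℝ (Fin q))
    (c : ℝ) (hc : 0 < c)
    (h1 : gradient f x - gradient f xstar =
      c • (Matrix.toEuclideanLin Mp) (z' - z) - (Matrix.toEuclideanLin Mm) (β - βstar))
    (h2 : (c / 2) • (Matrix.toEuclideanLin Mmᵀ) (x - xstar) = β - β')
    (h3 : (1 / 2 : ℝ) • (Matrix.toEuclideanLin Mpᵀ) (x - xstar) = z - zstar) :
    m * ‖x - xstar‖ ^ 2 ≤
      2 * c * ⟪z' - z, z - zstar⟫ + (2 / c) * ⟪β' - β, β - βstar⟫ :=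
  stmt_14_general n p q f m hsc Mp Mm x xstar z z' zstar β β' βstar c hc h1 h2 h3
end

section
/- Let M₋ be a real matrix with smallest nonzero singular value σ̃₋ > 0 and let M₊ have largest singular value σ₊. Suppose β, β* both lie in the column space of M₋ᵀ, c > 0, μ > 1, g ∈ R^n with ‖g‖ ≤ M‖x − x*‖, and the equation g = cM₊(z' − z) − M₋(β − β*) holds. Then (1/c)‖β − β*‖² ≤ (cμσ₊²)/((μ−1)σ̃₋²)·‖z' − z‖² + (μM²)/(cσ̃₋²)·‖x − x*‖². -/
open Matrix

/-- The largest singular value of a real matrix `M`: the supremum of `‖M y‖`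
over vectors `y` in the closed unit ball. -/
noncomputable def sigmaMax {a b : ℕ} (M : Matrix (Fin a) (Fin b) ℝ) : ℝ :=
  sSup ((fun y => ‖Matrix.toEuclideanLin M y‖) '' {y : EuclideanSpace ℝ (Fin b) | ‖y‖ ≤ 1})

/-- The smallest nonzero singular value of a real matrix `M`: the infimum of `‖M y‖`
over unit vectors `y` in the column space of `Mᵀ`. -/
noncomputable def sigmaMinPos {a b : ℕ} (M : Matrix (Fin a) (Fin b) ℝ) : ℝ :=
  sInf ((fun y => ‖Matrix.toEuclideanLin M y‖) ''
    {y : EuclideanSpace ℝ (Fin b) | ‖y‖ = 1 ∧ y ∈ LinearMap.range (Matrix.toEuclideanLin Mᵀ)})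

/-!
Rearranging the hypothesis gives `M₋ (β - β*) = c M₊ (z' - z) - g`. Since `β - β*` lies in the
row space of `M₋`, its norm is at most `‖M₋ (β - β*)‖ / σ̃₋`; the right-hand side is then split by
the weighted inequality `‖a - b‖² ≤ μ/(μ-1) ‖a‖² + μ ‖b‖²` and bounded using `‖M₊ w‖ ≤ σ₊ ‖w‖`
and `‖g‖ ≤ M ‖x - x*‖`.
-/

lemma norm_sub_sq_le_of_one_lt {E : Type*} [SeminormedAddCommGroup E] (a b : E) {μ : ℝ}
    (hμ : 1 < μ) : ‖a - b‖ ^ 2 ≤ μ / (μ - 1) * ‖a‖ ^ 2 + μ * ‖b‖ ^ 2 := by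
  have hμ1 : 0 < μ - 1 := sub_pos.2 hμ
  have gap : μ / (μ - 1) * ‖a‖ ^ 2 + μ * ‖b‖ ^ 2 - (‖a‖ + ‖b‖) ^ 2 =
      (‖a‖ - (μ - 1) * ‖b‖) ^ 2 / (μ - 1) := by
    field_simp
    ring
  calc ‖a - b‖ ^ 2 ≤ (‖a‖ + ‖b‖) ^ 2 := by gcongr; exact norm_sub_le a b
    _ ≤ μ / (μ - 1) * ‖a‖ ^ 2 + μ * ‖b‖ ^ 2 := by
      linarith [div_nonneg (sq_nonneg (‖a‖ - (μ - 1) * ‖b‖)) hμ1.le]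

lemma norm_map_inv_norm_smul_mul_norm {E F : Type*} [NormedAddCommGroup E] [NormedSpace ℝ E]
    [NormedAddCommGroup F] [NormedSpace ℝ F] (f : E →ₗ[ℝ] F) (w : E) :
    ‖f (‖w‖⁻¹ • w)‖ * ‖w‖ = ‖f w‖ := by
  rcases eq_or_ne w 0 with rfl | hw
  · simp
  · rw [map_smul, norm_smul, norm_inv, norm_norm, mul_right_comm,
      inv_mul_cancel₀ (norm_ne_zero_iff.2 hw), one_mul]

section SingularValues

variable {a b : ℕ} (M : Matrix (Fin a) (Fin b) ℝ)

lemma bddAbove_sigmaMax_set :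
    BddAbove ((fun y => ‖toEuclideanLin M y‖) '' {y : EuclideanSpace ℝ (Fin b) | ‖y‖ ≤ 1}) := by
  refine ⟨‖LinearMap.toContinuousLinearMap (toEuclideanLin M)‖, ?_⟩
  rintro r ⟨y, hy, rfl⟩
  simpa using (LinearMap.toContinuousLinearMap (toEuclideanLin M)).le_opNorm_of_le hy

lemma norm_toEuclideanLin_le_sigmaMax (w : EuclideanSpace ℝ (Fin b)) :
    ‖toEuclideanLin M w‖ ≤ sigmaMax M * ‖w‖ := by
  rcases eq_or_ne w 0 with rfl | hw
  · simp
  have hunit : ‖‖w‖⁻¹ • w‖ ≤ 1 := (norm_smul_inv_norm hw).le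
  rw [← norm_map_inv_norm_smul_mul_norm]
  gcongr
  exact le_csSup (bddAbove_sigmaMax_set M) ⟨_, hunit, rfl⟩

lemma sigmaMinPos_mul_norm_le_norm_toEuclideanLin (v : EuclideanSpace ℝ (Fin b))
    (hv : v ∈ LinearMap.range (toEuclideanLin Mᵀ)) :
    sigmaMinPos M * ‖v‖ ≤ ‖toEuclideanLin M v‖ := by
  rcases eq_or_ne v 0 with rfl | hv0
  · simp
  have hunit : ‖‖v‖⁻¹ • v‖ = 1 ∧ ‖v‖⁻¹ • v ∈ LinearMap.range (toEuclideanLin Mᵀ) :=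
    ⟨norm_smul_inv_norm hv0, Submodule.smul_mem _ _ hv⟩
  rw [← norm_map_inv_norm_smul_mul_norm]
  gcongr
  exact csInf_le ⟨0, by rintro r ⟨y, -, rfl⟩; exact norm_nonneg _⟩ ⟨_, hunit, rfl⟩

end SingularValues

theorem stmt_16_general (n p q : ℕ) (Mp : Matrix (Fin n) (Fin p) ℝ) (Mm : Matrix (Fin n) (Fin q) ℝ)
    (hσm : 0 < sigmaMinPos Mm)
    (β βstar : EuclideanSpace ℝ (Fin q))
    (hβ : β ∈ LinearMap.range (Matrix.toEuclideanLin Mmᵀ))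
    (hβstar : βstar ∈ LinearMap.range (Matrix.toEuclideanLin Mmᵀ))
    (c μ M : ℝ) (hc : 0 < c) (hμ : 1 < μ)
    (x xstar : EuclideanSpace ℝ (Fin n)) (z z' : EuclideanSpace ℝ (Fin p))
    (g : EuclideanSpace ℝ (Fin n)) (hg : ‖g‖ ≤ M * ‖x - xstar‖)
    (heq : g = c • (Matrix.toEuclideanLin Mp) (z' - z) - (Matrix.toEuclideanLin Mm) (β - βstar)) :
    (1 / c) * ‖β - βstar‖ ^ 2 ≤
      c * μ * sigmaMax Mp ^ 2 / ((μ - 1) * sigmaMinPos Mm ^ 2) * ‖z' - z‖ ^ 2 +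
      μ * M ^ 2 / (c * sigmaMinPos Mm ^ 2) * ‖x - xstar‖ ^ 2 := by
  have hMm : toEuclideanLin Mm (β - βstar) = c • toEuclideanLin Mp (z' - z) - g := by
    rw [heq, sub_sub_cancel]
  have hkey : (sigmaMinPos Mm * ‖β - βstar‖) ^ 2 ≤
      μ / (μ - 1) * (c * (sigmaMax Mp * ‖z' - z‖)) ^ 2 + μ * (M * ‖x - xstar‖) ^ 2 :=
    calc (sigmaMinPos Mm * ‖β - βstar‖) ^ 2 ≤ ‖toEuclideanLin Mm (β - βstar)‖ ^ 2 := by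
          gcongr
          exact sigmaMinPos_mul_norm_le_norm_toEuclideanLin Mm _ (sub_mem hβ hβstar)
      _ ≤ μ / (μ - 1) * ‖c • toEuclideanLin Mp (z' - z)‖ ^ 2 + μ * ‖g‖ ^ 2 := by
          rw [hMm]
          exact norm_sub_sq_le_of_one_lt _ _ hμ
      _ ≤ μ / (μ - 1) * (c * (sigmaMax Mp * ‖z' - z‖)) ^ 2 + μ * (M * ‖x - xstar‖) ^ 2 := by
          rw [norm_smul, Real.norm_of_nonneg hc.le]
          gcongr
          exact norm_toEuclideanLin_le_sigmaMax Mp _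
  calc (1 / c) * ‖β - βstar‖ ^ 2
      = (sigmaMinPos Mm * ‖β - βstar‖) ^ 2 / (c * sigmaMinPos Mm ^ 2) := by
        field_simp
    _ ≤ (μ / (μ - 1) * (c * (sigmaMax Mp * ‖z' - z‖)) ^ 2 + μ * (M * ‖x - xstar‖) ^ 2) /
          (c * sigmaMinPos Mm ^ 2) := by gcongr
    _ = _ := by field_simp

theorem stmt_16 (n p q : ℕ) (Mp : Matrix (Fin n) (Fin p) ℝ) (Mm : Matrix (Fin n) (Fin q) ℝ)
    (hσm : 0 < sigmaMinPos Mm)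
    (β βstar : EuclideanSpace ℝ (Fin q))
    (hβ : β ∈ LinearMap.range (Matrix.toEuclideanLin Mmᵀ))
    (hβstar : βstar ∈ LinearMap.range (Matrix.toEuclideanLin Mmᵀ))
    (c μ M : ℝ) (hc : 0 < c) (hμ : 1 < μ) (hM : 0 < M)
    (x xstar : EuclideanSpace ℝ (Fin n)) (z z' : EuclideanSpace ℝ (Fin p))
    (g : EuclideanSpace ℝ (Fin n)) (hg : ‖g‖ ≤ M * ‖x - xstar‖)
    (heq : g = c • (Matrix.toEuclideanLin Mp) (z' - z) - (Matrix.toEuclideanLin Mm) (β - βstar)) :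
    (1 / c) * ‖β - βstar‖ ^ 2 ≤
      c * μ * sigmaMax Mp ^ 2 / ((μ - 1) * sigmaMinPos Mm ^ 2) * ‖z' - z‖ ^ 2 +
      μ * M ^ 2 / (c * sigmaMinPos Mm ^ 2) * ‖x - xstar‖ ^ 2 :=
  stmt_16_general n p q Mp Mm hσm β βstar hβ hβstar c μ M hc hμ x xstar z z' g hg heq
end

section
/- With the ADMM iteration for decentralized consensus: ∇f(x^{k+1}) + M₋β^{k+1} − cM₊(z^k − z^{k+1}) = 0, β^{k+1} = β^k + (c/2)M₋ᵀx^{k+1}, z^k = (1/2)M₊ᵀx^k for all k, defining α^k = M₋β^k, L₊ = (1/2)M₊M₊ᵀ, L₋ = (1/2)M₋M₋ᵀ, and W = (1/2)(L₊ + L₋), the iteration is equivalent to: ∇f(x^{k+1}) + α^k + 2cWx^{k+1} − cL₊x^k = 0 and α^{k+1} = α^k + cL₋x^{k+1}. -/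
open Matrix

theorem stmt_18_general (n p : ℕ) (f : EuclideanSpace ℝ (Fin n) → ℝ)
    (Mp Mm : Matrix (Fin n) (Fin p) ℝ) (c : ℝ)
    (x : ℕ → EuclideanSpace ℝ (Fin n))
    (z β : ℕ → EuclideanSpace ℝ (Fin p))
    -- the ADMM iteration
    (h1 : ∀ k, gradient f (x (k + 1)) + (Matrix.toEuclideanLin Mm) (β (k + 1)) -
      c • (Matrix.toEuclideanLin Mp) (z k - z (k + 1)) = 0)
    (h2 : ∀ k, β (k + 1) = β k + (c / 2) • (Matrix.toEuclideanLin Mmᵀ) (x (k + 1)))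
    (h3 : ∀ k, z k = (1 / 2 : ℝ) • (Matrix.toEuclideanLin Mpᵀ) (x k))
    -- the new multiplier and the Laplacian / degree matrices
    (α : ℕ → EuclideanSpace ℝ (Fin n)) (hα : ∀ k, α k = (Matrix.toEuclideanLin Mm) (β k))
    (Lp Lm W : Matrix (Fin n) (Fin n) ℝ)
    (hLp : Lp = (1 / 2 : ℝ) • (Mp * Mpᵀ)) (hLm : Lm = (1 / 2 : ℝ) • (Mm * Mmᵀ))
    (hW : W = (1 / 2 : ℝ) • (Lp + Lm)) :
    (∀ k, gradient f (x (k + 1)) + α k + (2 * c) • (Matrix.toEuclideanLin W) (x (k + 1)) -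
      c • (Matrix.toEuclideanLin Lp) (x k) = 0) ∧
    (∀ k, α (k + 1) = α k + c • (Matrix.toEuclideanLin Lm) (x (k + 1))) := by
  have dual_update (k : ℕ) : α (k + 1) = α k + c • toEuclideanLin Lm (x (k + 1)) := by
    rw [hα, hα, h2, hLm]
    simp only [map_add, map_smul, LinearMap.smul_apply, toLpLin_mul_same, LinearMap.comp_apply]
    module
  have primal_coupling (k : ℕ) :
      toEuclideanLin Mp (z k - z (k + 1)) =
        toEuclideanLin Lp (x k) - toEuclideanLin Lp (x (k + 1)) := by
    rw [h3, h3, hLp]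
    simp only [map_sub, map_smul, LinearMap.smul_apply, toLpLin_mul_same, LinearMap.comp_apply]
  refine ⟨fun k => ?_, dual_update⟩
  have optimality := h1 k
  rw [← hα, dual_update, primal_coupling] at optimality
  rw [hW]
  simp only [map_add, map_smul, LinearMap.add_apply, LinearMap.smul_apply]
  linear_combination (norm := module) optimality

theorem stmt_18 (n p : ℕ) (f : EuclideanSpace ℝ (Fin n) → ℝ) (hdiff : Differentiable ℝ f)
    (Mp Mm : Matrix (Fin n) (Fin p) ℝ) (c : ℝ) (hc : 0 < c)
    (x : ℕ → EuclideanSpace ℝ (Fin n))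
    (z β : ℕ → EuclideanSpace ℝ (Fin p))
    -- the ADMM iteration
    (h1 : ∀ k, gradient f (x (k + 1)) + (Matrix.toEuclideanLin Mm) (β (k + 1)) -
      c • (Matrix.toEuclideanLin Mp) (z k - z (k + 1)) = 0)
    (h2 : ∀ k, β (k + 1) = β k + (c / 2) • (Matrix.toEuclideanLin Mmᵀ) (x (k + 1)))
    (h3 : ∀ k, z k = (1 / 2 : ℝ) • (Matrix.toEuclideanLin Mpᵀ) (x k))
    -- the new multiplier and the Laplacian / degree matrices
    (α : ℕ → EuclideanSpace ℝ (Fin n)) (hα : ∀ k, α k = (Matrix.toEuclideanLin Mm) (β k))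
    (Lp Lm W : Matrix (Fin n) (Fin n) ℝ)
    (hLp : Lp = (1 / 2 : ℝ) • (Mp * Mpᵀ)) (hLm : Lm = (1 / 2 : ℝ) • (Mm * Mmᵀ))
    (hW : W = (1 / 2 : ℝ) • (Lp + Lm)) :
    (∀ k, gradient f (x (k + 1)) + α k + (2 * c) • (Matrix.toEuclideanLin W) (x (k + 1)) -
      c • (Matrix.toEuclideanLin Lp) (x k) = 0) ∧
    (∀ k, α (k + 1) = α k + c • (Matrix.toEuclideanLin Lm) (x (k + 1))) :=
  stmt_18_general n p f Mp Mm c x z β h1 h2 h3 α hα Lp Lm W hLp hLm hW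
end
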